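/- arXiv:2605.18425 — 2 statements merged into one kernel-verified Lean document; each statement's English description precedes it below -/
import Mathlib

section
/- Let ξ, ξ' ∈ H^D. Then the function f: [0,1]^d → ℝ, f(y) = log(ξ(y)/ξ'(y)), is well-defined and continuously differentiable, and its derivative satisfies sup_{y∈[0,1]^d} ‖Df(y)‖₂ ≤ (C₁/B² + √d/B) ‖ξ − ξ'‖_{C¹}, where ‖g‖_{C¹} = max_{|β| ≤ 1} sup_{y} |D_β g(y)|. -/
open MeasureTheory Real Set
open scoped ENNReal NNReal

noncomputable section

abbrev Euc (d : ℕ) := EuclideanSpace ℝ (Fin d)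

def cube (d : ℕ) : Set (Euc d) := {x | ∀ i, x i ∈ Set.Icc (0:ℝ) 1}

def HolderNormLE {E F : Type*} [NormedAddCommGroup E] [NormedSpace ℝ E]
    [NormedAddCommGroup F] [NormedSpace ℝ F] (k : ℕ) (α Kb : ℝ) (f : E → F) (A : Set E) :
    Prop :=
  ContDiffOn ℝ k f A ∧
  ∃ a b : ℝ, 0 ≤ a ∧ 0 ≤ b ∧ a + b ≤ Kb ∧
    (∀ i ≤ k, ∀ x ∈ A, ‖iteratedFDerivWithin ℝ i f A x‖ ≤ a) ∧
    (∀ x ∈ A, ∀ y ∈ A,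
      ‖iteratedFDerivWithin ℝ k f A x - iteratedFDerivWithin ℝ k f A y‖ ≤ b * ‖x - y‖ ^ α)

/-- The discriminator hypothesis space `H^D`. -/
def memHD (d k : ℕ) (α B C₁ C₂ : ℝ) (ξ : Euc d → ℝ) : Prop :=
  (∀ y ∈ cube d, ξ y ∈ Set.Ioo (0:ℝ) 1) ∧
  (∀ y ∈ cube d, B ≤ ξ y ∧ ξ y ≤ 1 - B) ∧
  (∀ y ∈ cube d, ‖fderivWithin ℝ ξ (cube d) y‖ ≤ C₁) ∧
  HolderNormLE (k - 1) α C₂ ξ (cube d)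

/-- The `C¹`-norm `‖g‖_{C¹} = max_{|β| ≤ 1} sup_{x ∈ A} |D_β g(x)|` on a set `A`. -/
def C1normOn {d : ℕ} {F : Type*} [NormedAddCommGroup F] [NormedSpace ℝ F]
    (f : Euc d → F) (A : Set (Euc d)) : ℝ :=
  max (⨆ x : A, ‖f x.1‖)
    (⨆ i : Fin d, ⨆ x : A, ‖fderivWithin ℝ f A x.1 (EuclideanSpace.single i 1)‖)

/-!
Since `ξ, ξ' ≥ B > 0`, the map `log (ξ / ξ') = log ξ - log ξ'` is `C¹` with derivative
`Dξ / ξ - Dξ' / ξ' = (Dξ - Dξ') / ξ + (1/ξ - 1/ξ') Dξ'`. The first term is at most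
`‖Dξ - Dξ'‖ / B ≤ √d ‖ξ - ξ'‖_{C¹} / B`, the `√d` converting a bound on the partial derivatives
into one on the Euclidean operator norm; the second is at most
`|ξ - ξ'| C₁ / B² ≤ C₁ ‖ξ - ξ'‖_{C¹} / B²`.
-/

theorem OrthonormalBasis.opNorm_le_sqrt_card_mul {ι E : Type*} [Fintype ι]
    [NormedAddCommGroup E] [InnerProductSpace ℝ E] [CompleteSpace E]
    (b : OrthonormalBasis ι ℝ E) (L : E →L[ℝ] ℝ) {M : ℝ} (hM : 0 ≤ M)
    (h : ∀ i, ‖L (b i)‖ ≤ M) : ‖L‖ ≤ √(Fintype.card ι) * M := by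
  set c := (InnerProductSpace.toDual ℝ E).symm L
  have hc : ‖L‖ = ‖c‖ := ((InnerProductSpace.toDual ℝ E).symm.norm_map L).symm
  have hcoord : ∀ i, inner ℝ (b i) c = L (b i) := fun i => by
    rw [real_inner_comm, InnerProductSpace.toDual_symm_apply]
  rw [hc]
  refine (b.norm_le_card_mul_iSup_norm_inner c).trans ?_
  gcongr
  exact Real.iSup_le (fun i => (hcoord i).symm ▸ h i) hM

theorem convex_cube (d : ℕ) : Convex ℝ (cube d) := fun _ hx _ hy _ _ ha hb hab i =>
  convex_Icc (0:ℝ) 1 (hx i) (hy i) ha hb hab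

theorem uniqueDiffOn_cube (d : ℕ) : UniqueDiffOn ℝ (cube d) := by
  refine uniqueDiffOn_convex (convex_cube d) ⟨WithLp.toLp 2 fun _ => 1 / 2, ?_⟩
  rw [mem_interior]
  refine ⟨⋂ i, EuclideanSpace.proj (𝕜 := ℝ) i ⁻¹' Ioo 0 1, ?_, ?_, ?_⟩
  · intro z hz i
    exact Ioo_subset_Icc_self (mem_iInter.1 hz i)
  · exact isOpen_iInter_of_finite fun i => isOpen_Ioo.preimage (EuclideanSpace.proj i).continuous
  · simp only [mem_iInter, mem_preimage]
    intro i
    norm_num [EuclideanSpace.proj]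

section C1norm

variable {d : ℕ} {A : Set (Euc d)} {x : Euc d}

theorem norm_le_C1normOn {F : Type*} [NormedAddCommGroup F] [NormedSpace ℝ F]
    {f : Euc d → F} {M : ℝ} (hf : ∀ y ∈ A, ‖f y‖ ≤ M) (hx : x ∈ A) :
    ‖f x‖ ≤ C1normOn f A := by
  have hbdd : BddAbove (range fun y : A => ‖f y.1‖) := ⟨M, by rintro _ ⟨y, rfl⟩; exact hf y y.2⟩
  exact (le_ciSup hbdd ⟨x, hx⟩).trans (le_max_left _ _)

theorem norm_fderivWithin_single_le_C1normOn {F : Type*} [NormedAddCommGroup F]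
    [NormedSpace ℝ F] {f : Euc d → F} {M : ℝ} (hDf : ∀ y ∈ A, ‖fderivWithin ℝ f A y‖ ≤ M)
    (hx : x ∈ A) (i : Fin d) :
    ‖fderivWithin ℝ f A x (EuclideanSpace.single i 1)‖ ≤ C1normOn f A := by
  have hbdd : BddAbove (range fun y : A => ‖fderivWithin ℝ f A y (EuclideanSpace.single i 1)‖) := by
    refine ⟨M, ?_⟩
    rintro _ ⟨y, rfl⟩
    simpa [PiLp.norm_single] using
      (fderivWithin ℝ f A y).le_of_opNorm_le (hDf y y.2) (EuclideanSpace.single i (1 : ℝ))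
  calc ‖fderivWithin ℝ f A x (EuclideanSpace.single i 1)‖
      ≤ ⨆ y : A, ‖fderivWithin ℝ f A y (EuclideanSpace.single i 1)‖ := le_ciSup hbdd ⟨x, hx⟩
    _ ≤ ⨆ j : Fin d, ⨆ y : A, ‖fderivWithin ℝ f A y (EuclideanSpace.single j 1)‖ :=
        le_ciSup (f := fun j : Fin d =>
          ⨆ y : A, ‖fderivWithin ℝ f A y (EuclideanSpace.single j 1)‖) (finite_range _).bddAbove i
    _ ≤ C1normOn f A := le_max_right _ _

theorem norm_fderivWithin_le_sqrt_mul_C1normOn {f : Euc d → ℝ} {M₀ M₁ : ℝ}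
    (hf : ∀ y ∈ A, ‖f y‖ ≤ M₀) (hDf : ∀ y ∈ A, ‖fderivWithin ℝ f A y‖ ≤ M₁) (hx : x ∈ A) :
    ‖fderivWithin ℝ f A x‖ ≤ √d * C1normOn f A := by
  have hN : 0 ≤ C1normOn f A := (norm_nonneg _).trans (norm_le_C1normOn hf hx)
  simpa using (EuclideanSpace.basisFun (Fin d) ℝ).opNorm_le_sqrt_card_mul _ hN fun i => by
    simpa using norm_fderivWithin_single_le_C1normOn hDf hx i

end C1norm

theorem HasFDerivWithinAt.log_div {E : Type*} [NormedAddCommGroup E] [NormedSpace ℝ E]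
    {f g : E → ℝ} {f' g' : E →L[ℝ] ℝ} {s : Set E} {y : E}
    (hf : HasFDerivWithinAt f f' s y) (hg : HasFDerivWithinAt g g' s y)
    (hfs : ∀ z ∈ s, f z ≠ 0) (hgs : ∀ z ∈ s, g z ≠ 0) (hy : y ∈ s) :
    HasFDerivWithinAt (fun z => Real.log (f z / g z)) ((f y)⁻¹ • f' - (g y)⁻¹ • g') s y :=
  ((hf.log (hfs y hy)).sub (hg.log (hgs y hy))).congr
    (fun z hz => Real.log_div (hfs z hz) (hgs z hz)) (Real.log_div (hfs y hy) (hgs y hy))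

theorem norm_inv_smul_sub_inv_smul_le {E : Type*} [SeminormedAddCommGroup E] [NormedSpace ℝ E]
    {a b B : ℝ} (u v : E) (hB : 0 < B) (ha : B ≤ a) (hb : B ≤ b) :
    ‖a⁻¹ • u - b⁻¹ • v‖ ≤ ‖u - v‖ / B + |a - b| * ‖v‖ / B ^ 2 := by
  have ha0 : 0 < a := hB.trans_le ha
  have hb0 : 0 < b := hB.trans_le hb
  have hsplit : a⁻¹ • u - b⁻¹ • v = a⁻¹ • (u - v) + ((b - a) / (a * b)) • v := by
    rw [← inv_sub_inv ha0.ne' hb0.ne']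
    module
  have hab : B ^ 2 ≤ a * b := by nlinarith
  calc ‖a⁻¹ • u - b⁻¹ • v‖
      ≤ ‖u - v‖ / a + |a - b| * ‖v‖ / (a * b) := by
        rw [hsplit]
        refine (norm_add_le _ _).trans_eq ?_
        rw [norm_smul, norm_smul, norm_inv, norm_div, Real.norm_eq_abs, Real.norm_eq_abs,
          Real.norm_eq_abs, abs_sub_comm, abs_of_pos ha0, abs_of_pos (mul_pos ha0 hb0)]
        ring
    _ ≤ ‖u - v‖ / B + |a - b| * ‖v‖ / B ^ 2 := by gcongr

theorem contDiffOn_one_of_memHD {d k : ℕ} (hk : 2 ≤ k) {α B C₁ C₂ : ℝ} {ξ : Euc d → ℝ}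
    (hξ : memHD d k α B C₁ C₂ ξ) : ContDiffOn ℝ 1 ξ (cube d) :=
  hξ.2.2.2.1.of_le (by exact_mod_cast (by omega : 1 ≤ k - 1))

section Difference

variable {d k : ℕ} {α B C₁ C₂ : ℝ} {ξ ξ' : Euc d → ℝ} {y : Euc d}

theorem norm_sub_le_one_of_memHD (hξ : memHD d k α B C₁ C₂ ξ) (hξ' : memHD d k α B C₁ C₂ ξ')
    (hy : y ∈ cube d) : ‖ξ y - ξ' y‖ ≤ 1 := by
  obtain ⟨h0, h1⟩ := hξ.1 y hy
  obtain ⟨h0', h1'⟩ := hξ'.1 y hy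
  rw [Real.norm_eq_abs, abs_sub_le_iff]
  constructor <;> linarith

theorem abs_sub_le_C1normOn_of_memHD (hξ : memHD d k α B C₁ C₂ ξ)
    (hξ' : memHD d k α B C₁ C₂ ξ') (hy : y ∈ cube d) :
    |ξ y - ξ' y| ≤ C1normOn (fun y => ξ y - ξ' y) (cube d) :=
  norm_le_C1normOn (fun _ hz => norm_sub_le_one_of_memHD hξ hξ' hz) hy

theorem fderivWithin_sub_of_memHD (hk : 2 ≤ k) (hξ : memHD d k α B C₁ C₂ ξ)
    (hξ' : memHD d k α B C₁ C₂ ξ') (hy : y ∈ cube d) :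
    fderivWithin ℝ (fun y => ξ y - ξ' y) (cube d) y =
      fderivWithin ℝ ξ (cube d) y - fderivWithin ℝ ξ' (cube d) y :=
  fderivWithin_sub (uniqueDiffOn_cube d y hy)
    ((contDiffOn_one_of_memHD hk hξ).differentiableOn one_ne_zero y hy)
    ((contDiffOn_one_of_memHD hk hξ').differentiableOn one_ne_zero y hy)

theorem norm_fderivWithin_sub_le_sqrt_mul_C1normOn_of_memHD (hk : 2 ≤ k)
    (hξ : memHD d k α B C₁ C₂ ξ) (hξ' : memHD d k α B C₁ C₂ ξ') (hy : y ∈ cube d) :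
    ‖fderivWithin ℝ ξ (cube d) y - fderivWithin ℝ ξ' (cube d) y‖ ≤
      √d * C1normOn (fun y => ξ y - ξ' y) (cube d) := by
  have hDsub : ∀ z ∈ cube d, ‖fderivWithin ℝ (fun y => ξ y - ξ' y) (cube d) z‖ ≤ C₁ + C₁ := by
    intro z hz
    rw [fderivWithin_sub_of_memHD hk hξ hξ' hz]
    exact (norm_sub_le _ _).trans (add_le_add (hξ.2.2.1 z hz) (hξ'.2.2.1 z hz))
  rw [← fderivWithin_sub_of_memHD hk hξ hξ' hy]
  exact norm_fderivWithin_le_sqrt_mul_C1normOn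
    (fun _ hz => norm_sub_le_one_of_memHD hξ hξ' hz) hDsub hy

end Difference

theorem statement9_general {d k : ℕ} (hk : 2 ≤ k) {α B C₁ C₂ : ℝ}
    (hB : B ∈ Set.Ioo (0:ℝ) (1/2)) (ξ ξ' : Euc d → ℝ)
    (hξ : memHD d k α B C₁ C₂ ξ) (hξ' : memHD d k α B C₁ C₂ ξ') :
    (∀ y ∈ cube d, 0 < ξ y / ξ' y) ∧
    ContDiffOn ℝ 1 (fun y => Real.log (ξ y / ξ' y)) (cube d) ∧
    ∀ y ∈ cube d,
      ‖fderivWithin ℝ (fun y => Real.log (ξ y / ξ' y)) (cube d) y‖ ≤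
        (C₁ / B ^ 2 + Real.sqrt d / B) * C1normOn (fun y => ξ y - ξ' y) (cube d) := by
  obtain ⟨hB0, -⟩ := hB
  have hpos : ∀ y ∈ cube d, 0 < ξ y := fun y hy => (hξ.1 y hy).1
  have hpos' : ∀ y ∈ cube d, 0 < ξ' y := fun y hy => (hξ'.1 y hy).1
  have hC := contDiffOn_one_of_memHD hk hξ
  have hC' := contDiffOn_one_of_memHD hk hξ'
  have hdiv : ∀ y ∈ cube d, 0 < ξ y / ξ' y := fun y hy => div_pos (hpos y hy) (hpos' y hy)
  refine ⟨hdiv, (hC.div hC' fun y hy => (hpos' y hy).ne').log fun y hy => (hdiv y hy).ne',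
    fun y hy => ?_⟩
  have hlog := ((hC.differentiableOn one_ne_zero y hy).hasFDerivWithinAt).log_div
    (hC'.differentiableOn one_ne_zero y hy).hasFDerivWithinAt
    (fun z hz => (hpos z hz).ne') (fun z hz => (hpos' z hz).ne') hy
  set N := C1normOn (fun y => ξ y - ξ' y) (cube d)
  rw [hlog.fderivWithin (uniqueDiffOn_cube d y hy)]
  calc _ ≤ ‖fderivWithin ℝ ξ (cube d) y - fderivWithin ℝ ξ' (cube d) y‖ / B
        + |ξ y - ξ' y| * ‖fderivWithin ℝ ξ' (cube d) y‖ / B ^ 2 :=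
        norm_inv_smul_sub_inv_smul_le _ _ hB0 (hξ.2.1 y hy).1 (hξ'.2.1 y hy).1
    _ ≤ √d * N / B + N * C₁ / B ^ 2 := by
        have hvalue := abs_sub_le_C1normOn_of_memHD hξ hξ' hy
        have hderiv := norm_fderivWithin_sub_le_sqrt_mul_C1normOn_of_memHD hk hξ hξ' hy
        have hDξ' := hξ'.2.2.1 y hy
        have hN : 0 ≤ N := (abs_nonneg _).trans hvalue
        gcongr
    _ = (C₁ / B ^ 2 + √d / B) * N := by ring

/-- **Derivative bound for the helper function** `f(y) = log(ξ(y)/ξ'(y))`: `f` is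
well-defined and continuously differentiable on the cube, with
`sup_y ‖Df(y)‖₂ ≤ (C₁/B² + √d/B)‖ξ − ξ'‖_{C¹}`. -/
theorem statement9 {d k : ℕ} (hd : 0 < d) (hk : 2 ≤ k) {α B C₁ C₂ : ℝ}
    (hα : α ∈ Set.Ioc (0:ℝ) 1) (hB : B ∈ Set.Ioo (0:ℝ) (1/2)) (hC₁ : 0 < C₁)
    (hC₂ : 0 < C₂) (ξ ξ' : Euc d → ℝ)
    (hξ : memHD d k α B C₁ C₂ ξ) (hξ' : memHD d k α B C₁ C₂ ξ') :
    (∀ y ∈ cube d, 0 < ξ y / ξ' y) ∧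
    ContDiffOn ℝ 1 (fun y => Real.log (ξ y / ξ' y)) (cube d) ∧
    ∀ y ∈ cube d,
      ‖fderivWithin ℝ (fun y => Real.log (ξ y / ξ' y)) (cube d) y‖ ≤
        (C₁ / B ^ 2 + Real.sqrt d / B) * C1normOn (fun y => ξ y - ξ' y) (cube d) :=
  statement9_general hk hB ξ ξ' hξ hξ'
end
end

section
/- Assume the data process (Y_i) satisfies the Chazottes–Gouëzel concentration property with constants C > 0 and L > 0, and let μ = g_*ν. Then for every n ∈ ℕ and all t ≥ 0: P(ε^μ_gen(n) − E[ε^μ_gen(n)] ≥ t) ≤ exp(−γ̂₃ n t²), where γ̂₃ = B²/(2 C L² C₁²) and ε^μ_gen(n) = sup_{ξ∈H^D} |L̂^μ(ξ,n) − L^μ(ξ)|. -/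
open MeasureTheory Real Set
open scoped ENNReal NNReal

noncomputable section

/-- `L^μ(ξ)`. -/
def Lmu {d : ℕ} (μ : Measure (Euc d)) (ξ : Euc d → ℝ) : ℝ := ∫ y, Real.log (ξ y) ∂μ

/-- `L̂^μ(ξ,n)` for a realization `Y` of the data. -/
def empLmu {d : ℕ} (Y : ℕ → Euc d) (n : ℕ) (ξ : Euc d → ℝ) : ℝ :=
  (n : ℝ)⁻¹ * ∑ i ∈ Finset.range n, Real.log (ξ (Y i))

/-- Generalization error `ε^μ_gen(n) = sup_{ξ∈H^D} |L̂^μ(ξ,n) − L^μ(ξ)|` as a random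
variable on `Ω`. -/
def egenMu {d : ℕ} {Ω : Type*} (HD : Set (Euc d → ℝ)) (μ : Measure (Euc d))
    (Y : ℕ → Ω → Euc d) (n : ℕ) (ω : Ω) : ℝ :=
  ⨆ ξ : HD, |empLmu (fun i => Y i ω) n ξ.1 - Lmu μ ξ.1|

/-! For `ξ ∈ H^D` the map `log ∘ ξ` is `C₁ / B`-Lipschitz on the cube: `ξ` is `C₁`-Lipschitz by the
mean value theorem and `log` is `1 / B`-Lipschitz on `[B, ∞)`. Hence moving one point `T^[j] X` of
the orbit by `δ` in `M` moves the supremum of the empirical deviations by at most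
`C₁ L δ / (B n)`. The Chazottes–Gouëzel property then says that the centred generalization error
is sub-Gaussian with variance proxy `C n (C₁ L / (B n))²`, and the Chernoff bound gives the tail.
Measurability holds even though `M` need not be separable, because the deviation is a continuous
function of the sample `(g (T^[j] X))ⱼ`, which lives in the compact second-countable cube. -/

theorem cube_eq_preimage_pi (d : ℕ) :
    cube d = (EuclideanSpace.equiv (Fin d) ℝ) ⁻¹' Set.univ.pi fun _ => Icc 0 1 := by
  ext x; simp [cube, Pi.le_def, forall_and]

theorem isCompact_cube (d : ℕ) : IsCompact (cube d) := by
  rw [cube_eq_preimage_pi]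
  exact (EuclideanSpace.equiv (Fin d) ℝ).toHomeomorph.isCompact_preimage.2
    (isCompact_univ_pi fun _ => isCompact_Icc)

theorem Real.lipschitzOnWith_log_Ici {B : ℝ} (hB : 0 < B) :
    LipschitzOnWith (Real.toNNReal B)⁻¹ Real.log (Ici B) := by
  refine (convex_Ici B).lipschitzOnWith_of_nnnorm_hasDerivWithin_le
    (fun x hx => (Real.hasDerivAt_log (hB.trans_le hx).ne').hasDerivWithinAt) fun x hx => ?_
  have hx0 : 0 < x := hB.trans_le hx
  rw [nnnorm_inv, ← NNReal.coe_le_coe, NNReal.coe_inv, NNReal.coe_inv, Real.coe_toNNReal _ hB.le,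
    coe_nnnorm, Real.norm_of_nonneg hx0.le]
  exact inv_anti₀ hB hx

theorem lipschitzOnWith_log_of_memHD {d k : ℕ} (hk : 2 ≤ k) {α B C₁ C₂ : ℝ} (hB : 0 < B)
    {ξ : Euc d → ℝ} (hξ : memHD d k α B C₁ C₂ ξ) :
    LipschitzOnWith ((Real.toNNReal B)⁻¹ * Real.toNNReal C₁) (fun y => Real.log (ξ y))
      (cube d) := by
  obtain ⟨-, hbounds, hderiv, hsmooth, -⟩ := hξ
  have hξlip : LipschitzOnWith (Real.toNNReal C₁) ξ (cube d) :=
    (convex_cube d).lipschitzOnWith_of_nnnorm_fderivWithin_le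
      (hsmooth.differentiableOn (by norm_cast; omega))
      fun y hy => by
        rw [← Real.toNNReal_coe (r := ‖_‖₊), coe_nnnorm]
        exact Real.toNNReal_le_toNNReal (hderiv y hy)
  exact (Real.lipschitzOnWith_log_Ici hB).comp hξlip fun y hy => (hbounds y hy).1

-- No boundedness is needed: if one family is unbounded above, so is the other, and both suprema
-- are then the junk value `0`.
theorem abs_iSup_sub_iSup_le {ι : Sort*} {f g : ι → ℝ} {c : ℝ} (hc : 0 ≤ c)
    (h : ∀ i, |f i - g i| ≤ c) : |(⨆ i, f i) - ⨆ i, g i| ≤ c := by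
  have bdd_iff : BddAbove (range f) ↔ BddAbove (range g) := by
    constructor
    · rintro ⟨b, hb⟩
      refine ⟨b + c, forall_mem_range.2 fun i => ?_⟩
      linarith [(abs_le.1 (h i)).1, hb (mem_range_self i)]
    · rintro ⟨b, hb⟩
      refine ⟨b + c, forall_mem_range.2 fun i => ?_⟩
      linarith [(abs_le.1 (h i)).2, hb (mem_range_self i)]
  rcases isEmpty_or_nonempty ι with hι | hι
  · simpa [Real.iSup_of_isEmpty] using hc
  by_cases hf : BddAbove (range f)
  · have hg := bdd_iff.1 hf
    rw [abs_sub_le_iff, sub_le_iff_le_add, sub_le_iff_le_add]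
    constructor
    · exact ciSup_le fun i => by linarith [(abs_le.1 (h i)).2, le_ciSup hg i]
    · exact ciSup_le fun i => by linarith [(abs_le.1 (h i)).1, le_ciSup hf i]
  · rw [Real.iSup_of_not_bddAbove hf, Real.iSup_of_not_bddAbove (mt bdd_iff.2 hf)]
    simpa using hc

section EmpiricalDeviation

variable {ι E : Type*}

def empiricalDeviation (φ : ι → E → ℝ) (c : ι → ℝ) (n : ℕ) (y : Fin n → E) : ℝ :=
  ⨆ i, |(n : ℝ)⁻¹ * ∑ j, φ i (y j) - c i|

variable [PseudoMetricSpace E]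

theorem abs_empiricalDeviation_sub_le {φ : ι → E → ℝ} {K : ℝ≥0}
    (hφ : ∀ i, LipschitzWith K (φ i)) (c : ι → ℝ) {n : ℕ} (y z : Fin n → E) :
    |empiricalDeviation φ c n y - empiricalDeviation φ c n z| ≤
      K / n * ∑ j, dist (y j) (z j) := by
  have hsum : 0 ≤ ∑ j, dist (y j) (z j) := Finset.sum_nonneg fun j _ => dist_nonneg
  refine abs_iSup_sub_iSup_le (by positivity) fun i => ?_
  calc abs (|(n : ℝ)⁻¹ * ∑ j, φ i (y j) - c i| - |(n : ℝ)⁻¹ * ∑ j, φ i (z j) - c i|)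
      ≤ |(n : ℝ)⁻¹ * ∑ j, φ i (y j) - (n : ℝ)⁻¹ * ∑ j, φ i (z j)| := by
        simpa using abs_abs_sub_abs_le_abs_sub ((n : ℝ)⁻¹ * ∑ j, φ i (y j) - c i)
          ((n : ℝ)⁻¹ * ∑ j, φ i (z j) - c i)
    _ = (n : ℝ)⁻¹ * |∑ j, (φ i (y j) - φ i (z j))| := by
        rw [← mul_sub, ← Finset.sum_sub_distrib, abs_mul, abs_inv, Nat.abs_cast]
    _ ≤ (n : ℝ)⁻¹ * ∑ j, K * dist (y j) (z j) := by
        gcongr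
        refine (Finset.abs_sum_le_sum_abs _ _).trans (Finset.sum_le_sum fun j _ => ?_)
        rw [← Real.dist_eq]
        exact (hφ i).dist_le_mul _ _
    _ = K / n * ∑ j, dist (y j) (z j) := by
        rw [← Finset.mul_sum, div_eq_inv_mul, mul_assoc]

theorem abs_empiricalDeviation_update_sub_le {φ : ι → E → ℝ} {K : ℝ≥0}
    (hφ : ∀ i, LipschitzWith K (φ i)) (c : ι → ℝ) {n : ℕ} (y : Fin n → E) (j : Fin n)
    (a : E) :
    |empiricalDeviation φ c n (Function.update y j a) - empiricalDeviation φ c n y| ≤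
      K / n * dist a (y j) := by
  have hsum : ∑ l, dist (Function.update y j a l) (y l) = dist a (y j) := by
    rw [Finset.sum_eq_single j (fun l _ hl => by simp [Function.update_of_ne hl])
      (by simp), Function.update_self]
  simpa [hsum] using abs_empiricalDeviation_sub_le hφ c (Function.update y j a) y

theorem lipschitzWith_empiricalDeviation {φ : ι → E → ℝ} {K : ℝ≥0}
    (hφ : ∀ i, LipschitzWith K (φ i)) (c : ι → ℝ) (n : ℕ) :
    LipschitzWith K (empiricalDeviation φ c n) := by
  refine LipschitzWith.of_dist_le_mul fun y z => ?_
  rw [Real.dist_eq]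
  refine (abs_empiricalDeviation_sub_le hφ c y z).trans ?_
  have hle : ∑ j, dist (y j) (z j) ≤ n * dist y z := by
    simpa using Finset.sum_le_sum fun j (_ : j ∈ Finset.univ) => dist_le_pi_dist y z j
  rcases n.eq_zero_or_pos with rfl | hn
  · simp only [CharP.cast_eq_zero, div_zero, zero_mul]
    positivity
  · calc (K : ℝ) / n * ∑ j, dist (y j) (z j) ≤ K / n * (n * dist y z) := by gcongr
      _ = K * dist y z := by field_simp

end EmpiricalDeviation

theorem measure_integral_add_le_le_of_mgf_le {Ω : Type*} [MeasurableSpace Ω] {P : Measure Ω}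
    [IsProbabilityMeasure P] {Z : Ω → ℝ} (hZ : Measurable Z) {b : ℝ} (hb : ∀ ω, |Z ω| ≤ b)
    {σ2 : ℝ} (hσ2 : 0 ≤ σ2)
    (hmgf : ∀ τ : ℝ, ∫ ω, exp (τ * (Z ω - ∫ ω', Z ω' ∂P)) ∂P ≤ exp (τ ^ 2 * σ2 / 2))
    {t : ℝ} (ht : 0 ≤ t) :
    P {ω | (∫ ω', Z ω' ∂P) + t ≤ Z ω} ≤ ENNReal.ofReal (exp (-t ^ 2 / (2 * σ2))) := by
  set m := ∫ ω', Z ω' ∂P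
  have hm : |m| ≤ b := by
    simpa using norm_integral_le_of_norm_le_const (μ := P) (f := Z) (ae_of_all _ hb)
  have hsubG : ProbabilityTheory.HasSubgaussianMGF (fun ω => Z ω - m) ⟨σ2, hσ2⟩ P := by
    refine ⟨fun τ => Integrable.of_bound
      (by fun_prop : Measurable fun ω => exp (τ * (Z ω - m))).aestronglyMeasurable
      (exp (|τ| * (2 * b))) (ae_of_all _ fun ω => ?_),
      fun τ => (hmgf τ).trans_eq (by rw [mul_comm]; rfl)⟩
    rw [Real.norm_of_nonneg (exp_pos _).le, exp_le_exp]
    calc τ * (Z ω - m) ≤ |τ| * |Z ω - m| := by rw [← abs_mul]; exact le_abs_self _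
      _ ≤ |τ| * (2 * b) := by gcongr; linarith [abs_sub (Z ω) m, hb ω]
  have htail := hsubG.measure_ge_le ht
  have hset : {ω | m + t ≤ Z ω} = {ω | t ≤ Z ω - m} := by
    ext ω; simp only [mem_ofPred_eq]; constructor <;> intro h <;> linarith
  rw [hset, ← ofReal_measureReal]
  exact ENNReal.ofReal_le_ofReal htail

theorem egenMu_eq_empiricalDeviation {d : ℕ} {Ω : Type*} (HD : Set (Euc d → ℝ))
    (μ : Measure (Euc d)) (Y : ℕ → Ω → Euc d) (n : ℕ) (ω : Ω) :
    egenMu HD μ Y n ω =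
      empiricalDeviation (fun (ξ : HD) y => Real.log (ξ.1 y)) (fun ξ => Lmu μ ξ.1) n
        (fun j => Y j ω) := by
  refine iSup_congr fun ξ => ?_
  rw [empLmu, Fin.sum_univ_eq_sum_range (fun i => Real.log (ξ.1 (Y i ω)))]

theorem statement13_general {d k : ℕ} (hk : 2 ≤ k) {α B C₁ C₂ C L : ℝ}
    (hB : B ∈ Set.Ioo (0:ℝ) (1/2)) (hC₁ : 0 < C₁) (hC : 0 < C) (hL : 0 < L)
    {Ω : Type*} [MeasurableSpace Ω] (P : Measure Ω) [IsProbabilityMeasure P]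
    {M : Type*} [MetricSpace M] [MeasurableSpace M] [BorelSpace M]
    (T : M → M) (hT : Measurable T)
    (ν : Measure M)
    (g : M → Euc d) (hg : LipschitzWith (Real.toNNReal L) g)
    (hgcube : ∀ x, g x ∈ cube d)
    (X : Ω → M) (hX : Measurable X)
    (hCG : ∀ (m : ℕ) (K : (Fin m → M) → ℝ) (Lc : Fin m → ℝ),
      (∀ (x : Fin m → M) (i : Fin m) (a : M),
        |K (Function.update x i a) - K x| ≤ Lc i * dist a (x i)) →
      ∀ τ : ℝ,
        (∫ ω, Real.exp (τ * (K (fun i => T^[(i : ℕ)] (X ω)) -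
            ∫ ω', K (fun i => T^[(i : ℕ)] (X ω')) ∂P)) ∂P) ≤
          Real.exp (τ ^ 2 * C * (∑ i, (Lc i) ^ 2) / 2)) :
    ∀ n : ℕ, 0 < n → ∀ t : ℝ, 0 ≤ t →
      P {ω : Ω |
          (∫ ω', egenMu {ξ : Euc d → ℝ | memHD d k α B C₁ C₂ ξ} (Measure.map g ν)
              (fun i ω'' => g (T^[i] (X ω''))) n ω' ∂P) + t ≤
            egenMu {ξ : Euc d → ℝ | memHD d k α B C₁ C₂ ξ} (Measure.map g ν)
              (fun i ω'' => g (T^[i] (X ω''))) n ω} ≤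
        ENNReal.ofReal (Real.exp (-(B ^ 2 / (2 * C * L ^ 2 * C₁ ^ 2)) * n * t ^ 2)) := by
  intro n hn t ht
  set HD := {ξ : Euc d → ℝ | memHD d k α B C₁ C₂ ξ}
  let gc : M → cube d := codRestrict g (cube d) hgcube
  let φ : HD → cube d → ℝ := fun ξ y => Real.log (ξ.1 y)
  let c : HD → ℝ := fun ξ => Lmu (Measure.map g ν) ξ.1
  let sample : Ω → Fin n → cube d := fun ω j => gc (T^[j] (X ω))
  set K : ℝ≥0 := (Real.toNNReal B)⁻¹ * Real.toNNReal C₁ with hK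
  have hφ (ξ : HD) : LipschitzWith K (φ ξ) :=
    (lipschitzOnWith_log_of_memHD hk hB.1 ξ.2).to_restrict
  have hgc : LipschitzWith (Real.toNNReal L) gc := hg.subtype_mk hgcube
  have hegen : egenMu HD (Measure.map g ν) (fun i ω => g (T^[i] (X ω))) n =
      fun ω => empiricalDeviation φ c n (sample ω) :=
    funext fun ω => egenMu_eq_empiricalDeviation _ _ _ n ω
  have : CompactSpace (cube d) := isCompact_iff_compactSpace.1 (isCompact_cube d)
  have hcont := (lipschitzWith_empiricalDeviation hφ c n).continuous
  obtain ⟨b, hb⟩ := (isCompact_range hcont).isBounded.exists_norm_le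
  have hsample : Measurable sample :=
    measurable_pi_lambda _ fun j => hgc.continuous.measurable.comp ((hT.iterate j).comp hX)
  have hmgf := hCG n (empiricalDeviation (fun ξ => φ ξ ∘ gc) c n)
    (fun _ => (K * Real.toNNReal L : ℝ≥0) / n)
    (abs_empiricalDeviation_update_sub_le (fun ξ => (hφ ξ).comp hgc) c)
  rw [hegen]
  refine (measure_integral_add_le_le_of_mgf_le (hcont.measurable.comp hsample)
    (fun ω => hb _ (mem_range_self _))
    (σ2 := C * ∑ _j : Fin n, (((K * Real.toNNReal L : ℝ≥0) : ℝ) / n) ^ 2) (by positivity)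
    (fun τ => (hmgf τ).trans_eq (by rw [mul_assoc])) ht).trans_eq ?_
  rw [hK]
  push_cast [Real.coe_toNNReal _ hB.1.le, Real.coe_toNNReal _ hC₁.le, Real.coe_toNNReal _ hL.le]
  simp only [Finset.sum_const, Finset.card_univ, Fintype.card_fin, nsmul_eq_mul]
  congr 2
  field_simp

/-- **Concentration around the mean.** Under the Chazottes–Gouëzel concentration
property, `P(ε^μ_gen(n) − E[ε^μ_gen(n)] ≥ t) ≤ exp(−γ̂₃ n t²)` with
`γ̂₃ = B²/(2CL²C₁²)`. -/
theorem statement13 {d k : ℕ} (hd : 0 < d) (hk : 2 ≤ k) {α B C₁ C₂ C L : ℝ}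
    (hα : α ∈ Set.Ioc (0:ℝ) 1) (hB : B ∈ Set.Ioo (0:ℝ) (1/2)) (hC₁ : 0 < C₁)
    (hC₂ : 0 < C₂) (hC : 0 < C) (hL : 0 < L)
    {Ω : Type*} [MeasurableSpace Ω] (P : Measure Ω) [IsProbabilityMeasure P]
    {M : Type*} [MetricSpace M] [MeasurableSpace M] [BorelSpace M]
    (T : M → M) (hT : Measurable T)
    (ν : Measure M) [IsProbabilityMeasure ν] (hinv : Measure.map T ν = ν)
    (g : M → Euc d) (hg : LipschitzWith (Real.toNNReal L) g)
    (hgcube : ∀ x, g x ∈ cube d)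
    (X : Ω → M) (hX : Measurable X) (hlaw : Measure.map X P = ν)
    (hCG : ∀ (m : ℕ) (K : (Fin m → M) → ℝ) (Lc : Fin m → ℝ),
      (∀ (x : Fin m → M) (i : Fin m) (a : M),
        |K (Function.update x i a) - K x| ≤ Lc i * dist a (x i)) →
      ∀ τ : ℝ,
        (∫ ω, Real.exp (τ * (K (fun i => T^[(i : ℕ)] (X ω)) -
            ∫ ω', K (fun i => T^[(i : ℕ)] (X ω')) ∂P)) ∂P) ≤
          Real.exp (τ ^ 2 * C * (∑ i, (Lc i) ^ 2) / 2)) :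
    ∀ n : ℕ, 0 < n → ∀ t : ℝ, 0 ≤ t →
      P {ω : Ω |
          (∫ ω', egenMu {ξ : Euc d → ℝ | memHD d k α B C₁ C₂ ξ} (Measure.map g ν)
              (fun i ω'' => g (T^[i] (X ω''))) n ω' ∂P) + t ≤
            egenMu {ξ : Euc d → ℝ | memHD d k α B C₁ C₂ ξ} (Measure.map g ν)
              (fun i ω'' => g (T^[i] (X ω''))) n ω} ≤
        ENNReal.ofReal (Real.exp (-(B ^ 2 / (2 * C * L ^ 2 * C₁ ^ 2)) * n * t ^ 2)) :=
  statement13_general hk hB hC₁ hC hL P T hT ν g hg hgcube X hX hCG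
end
end
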